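/- arXiv:nlin/0110015 — 8 statements merged into one kernel-verified Lean document; each statement's English description precedes it below -/
import Mathlib

section
/- Let n ≥ 3 be an odd integer and set m = n − 1. On the phase space ℝ^{2m} with coordinates (q_1,…,q_m,p_1,…,p_m) and canonical Poisson bracket, define ω_j = 2 sin(jπ/n), and for 1 ≤ j ≤ (n−1)/2 define H_j = (1/2)(q_j² + p_j² + q_{n−j}² + p_{n−j}²) and u_j = q_j p_{n−j} − q_{n−j} p_j, and define the Birkhoff normal form H̄ = Σ_{j=1}^{(n−1)/2} ω_j H_j + (1/n)[ Σ_{1≤k<l≤(n−1)/2} (ω_k ω_l/4) H_k H_l + Σ_{k=1}^{(n−1)/2} (ω_k²/32)(3H_k² − u_k²) ]. Then the n functions H̄, H_1,…,H_{(n−1)/2}, u_1,…,u_{(n−1)/2} pairwise Poisson commute; in particular H̄ admits the n − 1 quadratic integrals H_j, u_j. -/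
/-!
STATEMENT 0: The Birkhoff normal form of the odd periodic FPU chain is Liouville
integrable with the quadratic integrals `H_j` and `u_j`: the `n` functions
`H̄, H_1, …, H_{(n-1)/2}, u_1, …, u_{(n-1)/2}` pairwise Poisson commute.
-/

noncomputable section

/-- The phase space `ℝ^{2m}` viewed as pairs `(q, p)` with `q, p : Fin m → ℝ`. -/
abbrev Phase (m : ℕ) : Type := (Fin m → ℝ) × (Fin m → ℝ)

/-- The canonical Poisson bracket
`{F,G} = Σ_i (∂F/∂q_i ∂G/∂p_i − ∂F/∂p_i ∂G/∂q_i)` on `ℝ^{2m}`. -/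
noncomputable def poissonBracket {m : ℕ} (F G : Phase m → ℝ) : Phase m → ℝ :=
  fun x => ∑ i : Fin m,
    (fderiv ℝ F x (Pi.single i 1, 0) * fderiv ℝ G x (0, Pi.single i 1)
      - fderiv ℝ F x (0, Pi.single i 1) * fderiv ℝ G x (Pi.single i 1, 0))

/-- The coordinate `q_j` (with the 1-based convention `j = 1, …, m`). -/
def qc {m : ℕ} (j : ℕ) (x : Phase m) : ℝ :=
  if h : j - 1 < m then x.1 ⟨j - 1, h⟩ else 0

/-- The coordinate `p_j` (with the 1-based convention `j = 1, …, m`). -/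
def pc {m : ℕ} (j : ℕ) (x : Phase m) : ℝ :=
  if h : j - 1 < m then x.2 ⟨j - 1, h⟩ else 0

/-- The FPU frequencies `ω_j = 2 sin (jπ/n)`. -/
def freq (n j : ℕ) : ℝ := 2 * Real.sin (j * Real.pi / n)

/-- `H_j = (1/2)(q_j² + p_j² + q_{n-j}² + p_{n-j}²)`, the linear energy of the
two modes with wave number `j`. -/
def Hmode (n : ℕ) {m : ℕ} (j : ℕ) (x : Phase m) : ℝ :=
  (1/2) * ((qc j x)^2 + (pc j x)^2 + (qc (n-j) x)^2 + (pc (n-j) x)^2)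

/-- `u_j = q_j p_{n-j} − q_{n-j} p_j`, the angular momentum of the
two modes with wave number `j`. -/
def umode (n : ℕ) {m : ℕ} (j : ℕ) (x : Phase m) : ℝ :=
  qc j x * pc (n-j) x - qc (n-j) x * pc j x

/-- The Birkhoff normal form of the periodic FPU chain with an odd number `n`
of particles:
`H̄ = Σ_j ω_j H_j + (1/n)[ Σ_{k<l} (ω_k ω_l/4) H_k H_l + Σ_k (ω_k²/32)(3H_k² − u_k²) ]`,
the indices running through `1 ≤ j,k,l ≤ (n−1)/2`. -/
def HbarOdd (n : ℕ) {m : ℕ} (x : Phase m) : ℝ :=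
  (∑ j ∈ Finset.Icc 1 ((n-1)/2), freq n j * Hmode n j x)
  + (1/(n:ℝ)) *
    ( (∑ k ∈ Finset.Icc 1 ((n-1)/2), ∑ l ∈ Finset.Ioc k ((n-1)/2),
        (freq n k * freq n l / 4) * (Hmode n k x * Hmode n l x))
    + (∑ k ∈ Finset.Icc 1 ((n-1)/2),
        (freq n k ^ 2 / 32) * (3 * (Hmode n k x)^2 - (umode n k x)^2)) )

/-- The `n` functions `H̄, H_1, …, H_{(n-1)/2}, u_1, …, u_{(n-1)/2}` on the
phase space `ℝ^{2(n-1)}`. -/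
def oddIntegrals (n : ℕ) : Set (Phase (n-1) → ℝ) :=
  {HbarOdd n}
  ∪ (fun j => Hmode n j) '' {j : ℕ | 1 ≤ j ∧ j ≤ (n-1)/2}
  ∪ (fun j => umode n j) '' {j : ℕ | 1 ≤ j ∧ j ≤ (n-1)/2}

/-! Each `H_j` and `u_j` is a quadratic form in the coordinates of the two modes `j` and `n - j`,
and for `j, k ≤ (n - 1) / 2` the mode pairs `{j, n - j}` and `{k, n - k}` are equal or disjoint.
So the brackets among the `H_j, u_j` vanish: for `j ≠ k` because they involve disjoint
coordinates, and for `j = k` because `H_j` is invariant under the rotation of the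
`(q_j, q_{n-j})`- and `(p_j, p_{n-j})`-planes generated by `u_j`. The bracket is a derivation, so
the functions commuting with a fixed `G` form a subalgebra; as `H̄` is a polynomial in the
`H_j, u_j`, it lies in that subalgebra whenever `G` is one of them. -/

namespace FPU

variable {m : ℕ}

def poissonBivector (m : ℕ) : (Phase m →L[ℝ] ℝ) →ₗ[ℝ] (Phase m →L[ℝ] ℝ) →ₗ[ℝ] ℝ :=
  LinearMap.mk₂ ℝ
    (fun φ ψ => ∑ i : Fin m,
      (φ (Pi.single i 1, 0) * ψ (0, Pi.single i 1)
        - φ (0, Pi.single i 1) * ψ (Pi.single i 1, 0)))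
    (fun _ _ _ => by
      simp only [add_apply, ← Finset.sum_add_distrib]
      exact Finset.sum_congr rfl fun _ _ => by ring)
    (fun _ _ _ => by
      simp only [smul_apply, smul_eq_mul, Finset.mul_sum]
      exact Finset.sum_congr rfl fun _ _ => by ring)
    (fun _ _ _ => by
      simp only [add_apply, ← Finset.sum_add_distrib]
      exact Finset.sum_congr rfl fun _ _ => by ring)
    (fun _ _ _ => by
      simp only [smul_apply, smul_eq_mul, Finset.mul_sum]
      exact Finset.sum_congr rfl fun _ _ => by ring)

theorem poissonBracket_apply (F G : Phase m → ℝ) (x : Phase m) :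
    poissonBracket F G x = poissonBivector m (fderiv ℝ F x) (fderiv ℝ G x) := rfl

theorem poissonBivector_swap (φ ψ : Phase m →L[ℝ] ℝ) :
    poissonBivector m φ ψ = -poissonBivector m ψ φ := by
  simp only [poissonBivector, LinearMap.mk₂_apply, ← Finset.sum_neg_distrib]
  exact Finset.sum_congr rfl fun _ _ => by ring

theorem poissonBracket_comm (F G : Phase m → ℝ) : poissonBracket F G = -poissonBracket G F :=
  funext fun _ => poissonBivector_swap _ _

theorem poissonBracket_self (F : Phase m → ℝ) : poissonBracket F F = 0 :=
  funext fun _ => self_eq_neg.mp (poissonBivector_swap _ _)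

section Leibniz

variable {F F' : Phase m → ℝ} (G : Phase m → ℝ) {x : Phase m}

theorem poissonBracket_add_left (hF : DifferentiableAt ℝ F x) (hF' : DifferentiableAt ℝ F' x) :
    poissonBracket (F + F') G x = poissonBracket F G x + poissonBracket F' G x := by
  simp only [poissonBracket_apply, fderiv_add hF hF', map_add, LinearMap.add_apply]

theorem poissonBracket_mul_left (hF : DifferentiableAt ℝ F x) (hF' : DifferentiableAt ℝ F' x) :
    poissonBracket (F * F') G x = F x * poissonBracket F' G x + F' x * poissonBracket F G x := by
  simp only [poissonBracket_apply, fderiv_mul hF hF', map_add, map_smul, LinearMap.add_apply,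
    LinearMap.smul_apply, smul_eq_mul]

theorem poissonBracket_const_left (c : ℝ) : poissonBracket (fun _ => c) G x = 0 := by
  simp only [poissonBracket_apply, fderiv_const_apply, map_zero, LinearMap.zero_apply]

end Leibniz

def poissonCommutant (G : Phase m → ℝ) : Subalgebra ℝ (Phase m → ℝ) where
  carrier := {F | Differentiable ℝ F ∧ poissonBracket F G = 0}
  mul_mem' := fun {F F'} ⟨hF, hFG⟩ ⟨hF', hF'G⟩ => ⟨hF.mul hF', funext fun x => by
    rw [poissonBracket_mul_left G (hF x) (hF' x), hFG, hF'G]; simp⟩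
  add_mem' := fun {F F'} ⟨hF, hFG⟩ ⟨hF', hF'G⟩ => ⟨hF.add hF', funext fun x => by
    rw [poissonBracket_add_left G (hF x) (hF' x), hFG, hF'G]; simp⟩
  algebraMap_mem' := fun c =>
    ⟨differentiable_const c, funext fun _ => poissonBracket_const_left G c⟩

theorem poissonBracket_eq_zero_of_mem_adjoin {s : Set (Phase m → ℝ)} {F G : Phase m → ℝ}
    (hs : ∀ F' ∈ s, Differentiable ℝ F' ∧ poissonBracket F' G = 0)
    (hF : F ∈ Algebra.adjoin ℝ s) : poissonBracket F G = 0 :=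
  (Algebra.adjoin_le (S := poissonCommutant G) hs hF).2

def qcL (m j : ℕ) : Phase m →L[ℝ] ℝ :=
  if h : j - 1 < m then (ContinuousLinearMap.proj ⟨j - 1, h⟩).comp (.fst ℝ _ _) else 0

def pcL (m j : ℕ) : Phase m →L[ℝ] ℝ :=
  if h : j - 1 < m then (ContinuousLinearMap.proj ⟨j - 1, h⟩).comp (.snd ℝ _ _) else 0

@[simp]
theorem coe_qcL (j : ℕ) : ⇑(qcL m j) = qc j := by
  funext x; unfold qcL qc; split_ifs <;> simp

@[simp]
theorem coe_pcL (j : ℕ) : ⇑(pcL m j) = pc j := by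
  funext x; unfold pcL pc; split_ifs <;> simp

theorem poissonBivector_qcL_qcL (a b : ℕ) : poissonBivector m (qcL m a) (qcL m b) = 0 := by
  simp [poissonBivector, qc]

theorem poissonBivector_pcL_pcL (a b : ℕ) : poissonBivector m (pcL m a) (pcL m b) = 0 := by
  simp [poissonBivector, pc]

theorem poissonBivector_qcL_pcL {a : ℕ} (b : ℕ) (ha : a - 1 < m) :
    poissonBivector m (qcL m a) (pcL m b) = if a - 1 = b - 1 then 1 else 0 := by
  by_cases hb : b - 1 < m
  · simp [poissonBivector, qc, pc, ha, hb, Pi.single_apply]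
  · simp [poissonBivector, qc, pc, hb]
    omega

theorem hasFDerivAt_qc (j : ℕ) (x : Phase m) : HasFDerivAt (qc j) (qcL m j) x := by
  simpa using (qcL m j).hasFDerivAt

theorem hasFDerivAt_pc (j : ℕ) (x : Phase m) : HasFDerivAt (pc j) (pcL m j) x := by
  simpa using (pcL m j).hasFDerivAt

def modeCovector (m n j : ℕ) (a b c d : ℝ) : Phase m →L[ℝ] ℝ :=
  a • qcL m j + b • pcL m j + c • qcL m (n - j) + d • pcL m (n - j)

theorem hasFDerivAt_Hmode (n j : ℕ) (x : Phase m) :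
    HasFDerivAt (Hmode n j)
      (modeCovector m n j (qc j x) (pc j x) (qc (n - j) x) (pc (n - j) x)) x := by
  have h := ((((hasFDerivAt_qc j x).pow 2).add ((hasFDerivAt_pc j x).pow 2)).add
    ((hasFDerivAt_qc (n - j) x).pow 2) |>.add ((hasFDerivAt_pc (n - j) x).pow 2)).const_mul
    (1 / 2 : ℝ)
  exact h.congr_fderiv (by ext v <;> simp [modeCovector] <;> ring)

theorem hasFDerivAt_umode (n j : ℕ) (x : Phase m) :
    HasFDerivAt (umode n j)
      (modeCovector m n j (pc (n - j) x) (-qc (n - j) x) (-pc j x) (qc j x)) x := by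
  have h := ((hasFDerivAt_qc j x).mul (hasFDerivAt_pc (n - j) x)).sub
    ((hasFDerivAt_qc (n - j) x).mul (hasFDerivAt_pc j x))
  exact h.congr_fderiv (by ext v <;> simp [modeCovector] <;> ring)

section Quadratic

variable {n j k : ℕ} (hm : n ≤ m + 1) (hj : 1 ≤ j ∧ j ≤ (n - 1) / 2)
  (hk : 1 ≤ k ∧ k ≤ (n - 1) / 2)
include hm hj hk

theorem poissonBivector_modeCovector (a b c d a' b' c' d' : ℝ) :
    poissonBivector m (modeCovector m n j a b c d) (modeCovector m n k a' b' c' d') =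
      if j = k then a * b' - b * a' + c * d' - d * c' else 0 := by
  simp only [modeCovector, map_add, map_smul, LinearMap.add_apply, LinearMap.smul_apply,
    smul_eq_mul, poissonBivector_qcL_qcL, poissonBivector_pcL_pcL]
  rw [poissonBivector_swap (pcL m _) (qcL m _), poissonBivector_swap (pcL m _) (qcL m _),
    poissonBivector_swap (pcL m _) (qcL m _), poissonBivector_swap (pcL m _) (qcL m _)]
  simp only [poissonBivector_qcL_pcL _ (show j - 1 < m by omega),
    poissonBivector_qcL_pcL _ (show n - j - 1 < m by omega),
    poissonBivector_qcL_pcL _ (show k - 1 < m by omega),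
    poissonBivector_qcL_pcL _ (show n - k - 1 < m by omega)]
  obtain rfl | hjk := eq_or_ne j k <;> split_ifs <;> first | omega | ring

theorem poissonBracket_Hmode_Hmode :
    poissonBracket (Hmode n j : Phase m → ℝ) (Hmode n k) = 0 := by
  funext x
  rw [Pi.zero_apply, poissonBracket_apply, (hasFDerivAt_Hmode n j x).fderiv,
    (hasFDerivAt_Hmode n k x).fderiv, poissonBivector_modeCovector hm hj hk]
  split_ifs with hjk
  · subst hjk; ring
  · rfl

theorem poissonBracket_Hmode_umode :
    poissonBracket (Hmode n j : Phase m → ℝ) (umode n k) = 0 := by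
  funext x
  rw [Pi.zero_apply, poissonBracket_apply, (hasFDerivAt_Hmode n j x).fderiv,
    (hasFDerivAt_umode n k x).fderiv, poissonBivector_modeCovector hm hj hk]
  split_ifs with hjk
  · subst hjk; ring
  · rfl

theorem poissonBracket_umode_umode :
    poissonBracket (umode n j : Phase m → ℝ) (umode n k) = 0 := by
  funext x
  rw [Pi.zero_apply, poissonBracket_apply, (hasFDerivAt_umode n j x).fderiv,
    (hasFDerivAt_umode n k x).fderiv, poissonBivector_modeCovector hm hj hk]
  split_ifs with hjk
  · subst hjk; ring
  · rfl

end Quadratic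

def quadraticIntegrals (n : ℕ) {m : ℕ} : Set (Phase m → ℝ) :=
  (fun j => Hmode n j) '' {j : ℕ | 1 ≤ j ∧ j ≤ (n - 1) / 2}
  ∪ (fun j => umode n j) '' {j : ℕ | 1 ≤ j ∧ j ≤ (n - 1) / 2}

theorem oddIntegrals_eq (n : ℕ) : oddIntegrals n = insert (HbarOdd n) (quadraticIntegrals n) :=
  Set.union_assoc _ _ _

theorem differentiable_of_mem_quadraticIntegrals {n : ℕ} {F : Phase m → ℝ}
    (hF : F ∈ quadraticIntegrals n) : Differentiable ℝ F := by
  rcases hF with ⟨j, -, rfl⟩ | ⟨j, -, rfl⟩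
  · exact fun x => (hasFDerivAt_Hmode n j x).differentiableAt
  · exact fun x => (hasFDerivAt_umode n j x).differentiableAt

theorem poissonBracket_quadraticIntegrals {n : ℕ} (hm : n ≤ m + 1) :
    ∀ F ∈ quadraticIntegrals (m := m) n, ∀ G ∈ quadraticIntegrals n,
      poissonBracket F G = 0 := by
  rintro F (⟨j, hj, rfl⟩ | ⟨j, hj, rfl⟩) G (⟨k, hk, rfl⟩ | ⟨k, hk, rfl⟩)
  · exact poissonBracket_Hmode_Hmode hm hj hk
  · exact poissonBracket_Hmode_umode hm hj hk
  · rw [poissonBracket_comm, poissonBracket_Hmode_umode hm hk hj, neg_zero]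
  · exact poissonBracket_umode_umode hm hj hk

theorem HbarOdd_eq (n : ℕ) :
    (HbarOdd n : Phase m → ℝ) =
      ∑ j ∈ Finset.Icc 1 ((n - 1) / 2), freq n j • Hmode n j
      + (1 / (n : ℝ)) •
        (∑ k ∈ Finset.Icc 1 ((n - 1) / 2), ∑ l ∈ Finset.Ioc k ((n - 1) / 2),
            (freq n k * freq n l / 4) • (Hmode n k * Hmode n l)
          + ∑ k ∈ Finset.Icc 1 ((n - 1) / 2),
            (freq n k ^ 2 / 32) • ((3 : ℝ) • Hmode n k ^ 2 - umode n k ^ 2)) := by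
  funext x
  simp [HbarOdd, Finset.sum_apply, mul_add]

theorem HbarOdd_mem_adjoin (n : ℕ) :
    (HbarOdd n : Phase m → ℝ) ∈ Algebra.adjoin ℝ (quadraticIntegrals n) := by
  have hH : ∀ j ∈ Finset.Icc 1 ((n - 1) / 2),
      (Hmode n j : Phase m → ℝ) ∈ Algebra.adjoin ℝ (quadraticIntegrals n) := fun j hj =>
    Algebra.subset_adjoin (Or.inl ⟨j, Finset.mem_Icc.mp hj, rfl⟩)
  have hu : ∀ j ∈ Finset.Icc 1 ((n - 1) / 2),
      (umode n j : Phase m → ℝ) ∈ Algebra.adjoin ℝ (quadraticIntegrals n) := fun j hj =>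
    Algebra.subset_adjoin (Or.inr ⟨j, Finset.mem_Icc.mp hj, rfl⟩)
  rw [HbarOdd_eq]
  refine add_mem (sum_mem fun j hj => Subalgebra.smul_mem _ (hH j hj) _)
    (Subalgebra.smul_mem _ (add_mem (sum_mem fun k hk => sum_mem fun l hl => ?_)
      (sum_mem fun k hk => ?_)) _)
  · have hl' : l ∈ Finset.Icc 1 ((n - 1) / 2) := by
      simp only [Finset.mem_Icc, Finset.mem_Ioc] at hk hl ⊢; omega
    exact Subalgebra.smul_mem _ (mul_mem (hH k hk) (hH l hl')) _
  · exact Subalgebra.smul_mem _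
      (sub_mem (Subalgebra.smul_mem _ (pow_mem (hH k hk) 2) _) (pow_mem (hu k hk) 2)) _

end FPU

open FPU

theorem odd_fpu_birkhoff_normal_form_integrable_general
    (n : ℕ) :
    ∀ F ∈ oddIntegrals n, ∀ G ∈ oddIntegrals n,
      poissonBracket F G = 0 := by
  have hQ := poissonBracket_quadraticIntegrals (m := n - 1) (n := n) (by omega)
  have hbar : ∀ G ∈ quadraticIntegrals n, poissonBracket (HbarOdd n) G = 0 := fun G hG =>
    poissonBracket_eq_zero_of_mem_adjoin
      (fun F hF => ⟨differentiable_of_mem_quadraticIntegrals hF, hQ F hF G hG⟩)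
      (HbarOdd_mem_adjoin n)
  rw [oddIntegrals_eq]
  rintro F (rfl | hF) G (rfl | hG)
  · exact poissonBracket_self _
  · exact hbar G hG
  · rw [poissonBracket_comm, hbar F hF, neg_zero]
  · exact hQ F hF G hG

/-- **Proposition 1 of the paper.** For odd `n ≥ 3`, the Birkhoff normal form `H̄`
of the periodic FPU chain and the quadratic functions `H_j, u_j`
(`1 ≤ j ≤ (n−1)/2`) pairwise Poisson commute; in particular `H̄` admits the
`n − 1` quadratic integrals `H_j, u_j`. -/
theorem odd_fpu_birkhoff_normal_form_integrable
    (n : ℕ) (hn : 3 ≤ n) (hodd : Odd n) :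
    ∀ F ∈ oddIntegrals n, ∀ G ∈ oddIntegrals n,
      poissonBracket F G = 0 :=
  odd_fpu_birkhoff_normal_form_integrable_general n
end
end

section
/- Let h, h̃ > 0. The map G : ℝ⁶ → ℝ⁴, G(u,v,w,ũ,ṽ,w̃) = (u, ũ, vṽ − ww̃, vw̃ + ṽw), maps the product of spheres S = {(u,v,w,ũ,ṽ,w̃) : u² + v² + w² = h², ũ² + ṽ² + w̃² = h̃²} onto the full singular reduced space P_{h,h̃} = { (π, ρ, σ, τ) ∈ ℝ⁴ : σ² + τ² = (h² − π²)(h̃² − ρ²), |π| ≤ h, |ρ| ≤ h̃ }. That is, for every (π, ρ, σ, τ) with σ² + τ² = (h² − π²)(h̃² − ρ²), |π| ≤ h and |ρ| ≤ h̃, there exists a point of S with these invariants. -/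
/-!
Writing `z = v + i w` and `z̃ = ṽ + i w̃`, the invariants `σ + i τ` are the product `z z̃`, while the
sphere equations prescribe `|z|² = h² − π²` and `|z̃|² = h̃² − ρ²`. Any complex number whose squared
modulus is a product `a b` of nonnegative reals factors as `z z̃` with `|z|² = a`, `|z̃|² = b`.
-/

namespace Complex

theorem exists_mul_eq_of_normSq_eq_mul {a b : ℝ} (ha : 0 ≤ a) (hb : 0 ≤ b) {c : ℂ}
    (hc : normSq c = a * b) : ∃ z w : ℂ, normSq z = a ∧ normSq w = b ∧ z * w = c := by
  rcases ha.eq_or_lt with rfl | ha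
  · have hc0 : c = 0 := normSq_eq_zero.mp (by rw [hc, zero_mul])
    exact ⟨0, √b, by simp, by rw [normSq_ofReal, Real.mul_self_sqrt hb], by simp [hc0]⟩
  · have hsqrt : (√a : ℂ) ≠ 0 := ofReal_ne_zero.mpr (Real.sqrt_pos.mpr ha).ne'
    refine ⟨√a, c / √a, by rw [normSq_ofReal, Real.mul_self_sqrt ha.le], ?_,
      mul_div_cancel₀ c hsqrt⟩
    rw [normSq_div, normSq_ofReal, Real.mul_self_sqrt ha.le, hc]
    field_simp

end Complex

theorem invariant_map_onto_reduced_space_general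
    (h ht : ℝ)
    (pi1 rho sigma tau : ℝ)
    (hrel : sigma^2 + tau^2 = (h^2 - pi1^2) * (ht^2 - rho^2))
    (hpi : |pi1| ≤ h) (hrho : |rho| ≤ ht) :
    ∃ u v w ut vt wt : ℝ,
      u^2 + v^2 + w^2 = h^2 ∧ ut^2 + vt^2 + wt^2 = ht^2 ∧
      u = pi1 ∧ ut = rho ∧ v*vt - w*wt = sigma ∧ v*wt + vt*w = tau := by
  have hpi2 : pi1 ^ 2 ≤ h ^ 2 := sq_le_sq' (abs_le.mp hpi).1 (abs_le.mp hpi).2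
  have hrho2 : rho ^ 2 ≤ ht ^ 2 := sq_le_sq' (abs_le.mp hrho).1 (abs_le.mp hrho).2
  obtain ⟨z, zt, hz, hzt, hprod⟩ := Complex.exists_mul_eq_of_normSq_eq_mul
    (sub_nonneg.mpr hpi2) (sub_nonneg.mpr hrho2) (c := ⟨sigma, tau⟩)
    (by rw [Complex.normSq_mk, ← hrel]; ring)
  rw [Complex.normSq_apply] at hz hzt
  have hre := congrArg Complex.re hprod
  have him := congrArg Complex.im hprod
  rw [Complex.mul_re] at hre
  rw [Complex.mul_im] at him
  exact ⟨pi1, z.re, z.im, rho, zt.re, zt.im, by linear_combination hz,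
    by linear_combination hzt, rfl, rfl, hre, by linear_combination him⟩

theorem invariant_map_onto_reduced_space
    (h ht : ℝ) (hh : 0 < h) (hht : 0 < ht)
    (pi1 rho sigma tau : ℝ)
    (hrel : sigma^2 + tau^2 = (h^2 - pi1^2) * (ht^2 - rho^2))
    (hpi : |pi1| ≤ h) (hrho : |rho| ≤ ht) :
    ∃ u v w ut vt wt : ℝ,
      u^2 + v^2 + w^2 = h^2 ∧ ut^2 + vt^2 + wt^2 = ht^2 ∧
      u = pi1 ∧ ut = rho ∧ v*vt - w*wt = sigma ∧ v*wt + vt*w = tau :=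
  invariant_map_onto_reduced_space_general h ht pi1 rho sigma tau hrel hpi hrho
end

section
/- Let h, h̃ > 0 and let x, y be two points of S = {(u,v,w,ũ,ṽ,w̃) ∈ ℝ⁶ : u² + v² + w² = h², ũ² + ṽ² + w̃² = h̃²}. Then x and y have the same invariants (π, ρ, σ, τ) = (u, ũ, vṽ − ww̃, vw̃ + ṽw) if and only if there exists t ∈ ℝ with R_t x = y, where R_t(u,v,w,ũ,ṽ,w̃) = (u, v cos 2t + w sin 2t, w cos 2t − v sin 2t, ũ, ṽ cos 2t − w̃ sin 2t, w̃ cos 2t + ṽ sin 2t). That is, the fibers of the invariant map are exactly the orbits of the circle action generated by I = u − ũ. -/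
/-!
Write `z = v + i w` and `p = ṽ + i w̃`. Then `R_t` multiplies `z` by `e^{-2it}` and `p` by
`e^{2it}`, and `σ + iτ = z p`. Once `u` and `ũ` are fixed, the sphere equations fix `|z|` and
`|p|`, and two pairs `(z, p)`, `(z', p')` with `|z| = |z'|`, `|p| = |p'|` and `z p = z' p'` differ
by such a counter-rotation: if `z' ≠ 0`, rotate `z'` onto `z` and cancel `z'` in `z p = z' p'`.
-/

namespace Complex

theorem exists_eq_mul_exp_mul_I_of_norm_eq {p q : ℂ} (h : ‖p‖ = ‖q‖) :
    ∃ θ : ℝ, q = p * exp (θ * I) := by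
  refine ⟨q.arg - p.arg, ?_⟩
  calc q = ‖q‖ * exp (q.arg * I) := (norm_mul_exp_arg_mul_I q).symm
    _ = ‖p‖ * exp (p.arg * I) * exp ((q.arg - p.arg : ℝ) * I) := by
      rw [h, mul_assoc, ← exp_add]; push_cast; ring_nf
    _ = p * exp ((q.arg - p.arg : ℝ) * I) := by rw [norm_mul_exp_arg_mul_I]

theorem exists_eq_mul_exp_neg_mul_I_and_eq_mul_exp_mul_I {z z' p p' : ℂ} (hz : ‖z‖ = ‖z'‖)
    (hp : ‖p‖ = ‖p'‖) (hzp : z * p = z' * p') :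
    ∃ θ : ℝ, z' = z * exp (-θ * I) ∧ p' = p * exp (θ * I) := by
  rcases eq_or_ne z' 0 with rfl | hz'
  · obtain ⟨θ, hθ⟩ := exists_eq_mul_exp_mul_I_of_norm_eq hp
    exact ⟨θ, by simpa using hz, hθ⟩
  · obtain ⟨θ, hθ⟩ := exists_eq_mul_exp_mul_I_of_norm_eq hz.symm
    refine ⟨θ, ?_, mul_left_cancel₀ hz' ?_⟩
    · rw [hθ, mul_assoc, ← exp_add]; simp
    · rw [← hzp, hθ]; ring

theorem mk_mul_exp_mul_I (a b θ : ℝ) :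
    (⟨a, b⟩ : ℂ) * exp (θ * I) =
      ⟨a * Real.cos θ - b * Real.sin θ, b * Real.cos θ + a * Real.sin θ⟩ := by
  apply Complex.ext <;> simp [exp_mul_I, ← ofReal_cos, ← ofReal_sin]; ring

theorem norm_mk_eq_norm_mk {a b c d : ℝ} (h : a ^ 2 + b ^ 2 = c ^ 2 + d ^ 2) :
    ‖(⟨a, b⟩ : ℂ)‖ = ‖(⟨c, d⟩ : ℂ)‖ := by
  simp only [norm_def, normSq_mk]; congr 1; linear_combination h

end Complex

theorem invariant_fibers_are_orbits_general
    (h ht : ℝ)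
    (u v w ut vt wt u' v' w' ut' vt' wt' : ℝ)
    (hx1 : u^2 + v^2 + w^2 = h^2) (hx2 : ut^2 + vt^2 + wt^2 = ht^2)
    (hy1 : u'^2 + v'^2 + w'^2 = h^2) (hy2 : ut'^2 + vt'^2 + wt'^2 = ht^2) :
    (u = u' ∧ ut = ut' ∧
     v*vt - w*wt = v'*vt' - w'*wt' ∧ v*wt + vt*w = v'*wt' + vt'*w')
    ↔ ∃ t : ℝ,
      ((u, v * Real.cos (2*t) + w * Real.sin (2*t),
            w * Real.cos (2*t) - v * Real.sin (2*t),
        ut, vt * Real.cos (2*t) - wt * Real.sin (2*t),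
            wt * Real.cos (2*t) + vt * Real.sin (2*t))
        : ℝ × ℝ × ℝ × ℝ × ℝ × ℝ) = (u', v', w', ut', vt', wt') := by
  constructor
  · rintro ⟨rfl, rfl, hσ, hτ⟩
    have hzp : (⟨v, w⟩ * ⟨vt, wt⟩ : ℂ) = ⟨v', w'⟩ * ⟨vt', wt'⟩ :=
      Complex.ext (by simpa using hσ) (by simp; linarith)
    obtain ⟨θ, hz, hp⟩ := Complex.exists_eq_mul_exp_neg_mul_I_and_eq_mul_exp_mul_I
      (Complex.norm_mk_eq_norm_mk (by linarith)) (Complex.norm_mk_eq_norm_mk (by linarith)) hzp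
    rw [← Complex.ofReal_neg, Complex.mk_mul_exp_mul_I, Real.cos_neg, Real.sin_neg, mul_neg,
      mul_neg, sub_neg_eq_add, ← sub_eq_add_neg] at hz
    rw [Complex.mk_mul_exp_mul_I] at hp
    obtain ⟨rfl, rfl⟩ := Complex.mk.inj hz
    obtain ⟨rfl, rfl⟩ := Complex.mk.inj hp
    refine ⟨θ / 2, ?_⟩
    rw [mul_div_cancel₀ θ two_ne_zero]
  · rintro ⟨t, he⟩
    simp only [Prod.mk.injEq] at he
    obtain ⟨rfl, rfl, rfl, rfl, rfl, rfl⟩ := he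
    refine ⟨rfl, rfl, ?_, ?_⟩
    · linear_combination -(v*vt - w*wt) * Real.sin_sq_add_cos_sq (2*t)
    · linear_combination -(v*wt + vt*w) * Real.sin_sq_add_cos_sq (2*t)

theorem invariant_fibers_are_orbits
    (h ht : ℝ) (hh : 0 < h) (hht : 0 < ht)
    (u v w ut vt wt u' v' w' ut' vt' wt' : ℝ)
    (hx1 : u^2 + v^2 + w^2 = h^2) (hx2 : ut^2 + vt^2 + wt^2 = ht^2)
    (hy1 : u'^2 + v'^2 + w'^2 = h^2) (hy2 : ut'^2 + vt'^2 + wt'^2 = ht^2) :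
    (u = u' ∧ ut = ut' ∧
     v*vt - w*wt = v'*vt' - w'*wt' ∧ v*wt + vt*w = v'*wt' + vt'*w')
    ↔ ∃ t : ℝ,
      ((u, v * Real.cos (2*t) + w * Real.sin (2*t),
            w * Real.cos (2*t) - v * Real.sin (2*t),
        ut, vt * Real.cos (2*t) - wt * Real.sin (2*t),
            wt * Real.cos (2*t) + vt * Real.sin (2*t))
        : ℝ × ℝ × ℝ × ℝ × ℝ × ℝ) = (u', v', w', ut', vt', wt') :=
  invariant_fibers_are_orbits_general h ht u v w ut vt wt u' v' w' ut' vt' wt' hx1 hx2 hy1 hy2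
end

section
/- Let ω, ω̃, h, h̃ > 0 and λ ∈ ℝ. The quadratic form Q on ℝ⁴ defined by Q(v, w, ṽ, w̃) = (ω² + λh̃)(v² + w²) + (ω̃² − λh)(ṽ² + w̃²) + 4ωω̃(vṽ − ww̃) is positive definite if and only if −λ² h h̃ + λ(ω̃² h̃ − ω² h) − 3 ω² ω̃² > 0. -/
/-!
STATEMENT 10: The quadratic form
`Q(v,w,ṽ,w̃) = (ω² + λh̃)(v² + w²) + (ω̃² − λh)(ṽ² + w̃²) + 4ωω̃(vṽ − ww̃)`
is positive definite if and only if `−λ²hh̃ + λ(ω̃²h̃ − ω²h) − 3ω²ω̃² > 0`.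
-/

theorem lyapunov_quadratic_form_definite_iff
    (ω ωt h ht l : ℝ) (hω : 0 < ω) (hωt : 0 < ωt) (hh : 0 < h) (hht : 0 < ht) :
    (∀ v w vt wt : ℝ, ¬(v = 0 ∧ w = 0 ∧ vt = 0 ∧ wt = 0) →
      0 < (ω^2 + l*ht)*(v^2 + w^2) + (ωt^2 - l*h)*(vt^2 + wt^2)
            + 4*ω*ωt*(v*vt - w*wt))
    ↔ 0 < -l^2*h*ht + l*(ωt^2*ht - ω^2*h) - 3*ω^2*ωt^2 := by
  constructor
  · intro H
    have hB : 0 < ωt^2 - l*h := by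
      have := H 0 0 1 0 (by simp)
      nlinarith [this]
    have hc : (2*ω*ωt) ≠ 0 := by positivity
    have := H (ωt^2 - l*h) 0 (-(2*ω*ωt)) 0 (by
      intro ⟨_, _, h3, _⟩
      exact hc (by linarith [neg_eq_zero.mp h3]))
    nlinarith [this, hB]
  · intro hD v w vt wt hne
    have hsum : 0 < (ω^2 + l*ht)*h + (ωt^2 - l*h)*ht := by
      nlinarith [mul_pos (pow_pos hω 2) hh, mul_pos (pow_pos hωt 2) hht]
    have hA : 0 < ω^2 + l*ht := by
      by_contra hA'
      push_neg at hA'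
      have hB' : 0 < ωt^2 - l*h := by
        nlinarith [mul_nonneg (neg_nonneg.mpr hA') hh.le]
      nlinarith [mul_nonneg (neg_nonneg.mpr hA') hB'.le,
        mul_pos (pow_pos hω 2) (pow_pos hωt 2)]
    have hB : 0 < ωt^2 - l*h := by
      nlinarith [mul_pos (pow_pos hω 2) (pow_pos hωt 2), sq_nonneg l,
        mul_pos hA (mul_pos (pow_pos hω 2) (pow_pos hωt 2))]
    push_neg at hne
    by_cases hv : v = 0
    · by_cases hw : w = 0
      · by_cases hvt : vt = 0
        · have hwt : wt ≠ 0 := hne hv hw hvt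
          nlinarith [sq_pos_of_ne_zero hwt, sq_nonneg ((ω^2+l*ht)*w - 2*ω*ωt*wt),
            sq_nonneg ((ω^2+l*ht)*v + 2*ω*ωt*vt), mul_pos hA hB, sq_nonneg v, sq_nonneg w]
        · nlinarith [sq_pos_of_ne_zero hvt, sq_nonneg ((ω^2+l*ht)*w - 2*ω*ωt*wt),
            sq_nonneg ((ω^2+l*ht)*v + 2*ω*ωt*vt), mul_pos hA hB, sq_nonneg v, sq_nonneg w,
            sq_nonneg wt]
      · nlinarith [sq_pos_of_ne_zero hw, sq_nonneg ((ωt^2-l*h)*wt - 2*ω*ωt*w),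
          sq_nonneg ((ωt^2-l*h)*vt + 2*ω*ωt*v), mul_pos hA hB, sq_nonneg vt, sq_nonneg wt,
          sq_nonneg v]
    · nlinarith [sq_pos_of_ne_zero hv, sq_nonneg ((ωt^2-l*h)*wt - 2*ω*ωt*w),
        sq_nonneg ((ωt^2-l*h)*vt + 2*ω*ωt*v), mul_pos hA hB, sq_nonneg vt, sq_nonneg wt,
        sq_nonneg w]
end

section
/- Let ω, ω̃, h, h̃ > 0. There exists λ ∈ ℝ with −λ² h h̃ + λ(ω̃² h̃ − ω² h) − 3 ω² ω̃² > 0 if and only if the bifurcation parameter r := ω⁴ h² − 14 ω² ω̃² h h̃ + ω̃⁴ h̃² is positive. Consequently, if r > 0 then the relative equilibria ±(h, 0, 0, h̃, 0, 0) admit a definite Lyapunov function of the form 32n·K ± 2λ h h̃·I and are stable. -/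
/-!
STATEMENT 11: There exists `λ ∈ ℝ` with `−λ²hh̃ + λ(ω̃²h̃ − ω²h) − 3ω²ω̃² > 0`
if and only if the bifurcation parameter `r = ω⁴h² − 14ω²ω̃²hh̃ + ω̃⁴h̃²` is
positive (so that for `r > 0` the relative equilibria `±(h,0,0,h̃,0,0)` admit a
definite Lyapunov function of the form `32n·K ± 2λhh̃·I` and are stable).
-/

theorem lyapunov_function_exists_iff_r_pos
    (ω ωt h ht : ℝ) (hω : 0 < ω) (hωt : 0 < ωt) (hh : 0 < h) (hht : 0 < ht) :
    (∃ l : ℝ, 0 < -l^2*h*ht + l*(ωt^2*ht - ω^2*h) - 3*ω^2*ωt^2)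
    ↔ 0 < ω^4*h^2 - 14*ω^2*ωt^2*h*ht + ωt^4*ht^2 := by
  constructor
  · rintro ⟨l, hl⟩
    nlinarith [sq_nonneg (ωt^2*ht - ω^2*h - 2*h*ht*l), mul_pos hh hht, sq_nonneg l]
  · intro hr
    refine ⟨(ωt^2*ht - ω^2*h) / (2*h*ht), ?_⟩
    have hpos : 0 < 2*h*ht := by positivity
    have h1 : (ωt^2*ht - ω^2*h) / (2*h*ht) * (2*h*ht) = ωt^2*ht - ω^2*h :=
      div_mul_cancel₀ _ (ne_of_gt hpos)
    nlinarith [sq_nonneg ((ωt^2*ht - ω^2*h) / (2*h*ht)), mul_pos hh hht]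
end

section
/- Let ω, ω̃, h, h̃ ∈ ℝ and n ≠ 0, and let M be the 4×4 real matrix M = (1/(8n)) · [[0, −ω²h, 0, 2ωω̃h], [ω²h, 0, 2ωω̃h, 0], [0, 2ωω̃h̃, 0, −ω̃²h̃], [2ωω̃h̃, 0, ω̃²h̃, 0]]. Then the characteristic polynomial of M is C(λ) = λ⁴ + λ² (ω⁴h² + ω̃⁴h̃² − 8ω²ω̃²hh̃)/(8n)² + 9 ω⁴ω̃⁴h²h̃²/(8n)⁴. In particular C(λ) = C(−λ). -/
/-!
The linearisation has the form `A = [[0,-a,0,b],[a,0,b,0],[0,c,0,-d],[c,0,d,0]]` with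
`a = kω²h`, `b = 2kωω̃h`, `c = 2kωω̃h̃`, `d = kω̃²h̃`, `k = 1/(8n)`. Its nonzero entries sit at
positions `(i, j)` with `i + j` odd, so `diag(1,-1,1,-1)` conjugates `A` to `-A`, which is why
expanding the determinant leaves only even powers: `X⁴ + (a² + d² - 2bc) X² + (ad - bc)²`,
where `(ad - bc)² = 9k⁴ω⁴ω̃⁴h²h̃²`.
-/

open Polynomial

theorem Matrix.charpoly_checkerboard {R : Type*} [CommRing R] (a b c d : R) :
    (!![0, -a, 0, b; a, 0, b, 0; 0, c, 0, -d; c, 0, d, 0] : Matrix (Fin 4) (Fin 4) R).charpoly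
      = X ^ 4 + C (a ^ 2 + d ^ 2 - 2 * b * c) * X ^ 2 + C ((a * d - b * c) ^ 2) := by
  rw [Matrix.charpoly, Matrix.det_succ_row_zero]
  simp [Fin.sum_univ_succ, Matrix.det_succ_row_zero, Fin.succAbove, Matrix.submatrix,
    Matrix.charmatrix_apply, Matrix.diagonal, Polynomial.C_ofNat]
  ring

theorem linearisation_charpoly_general
    (ω ωt h ht nn : ℝ)
    (M : Matrix (Fin 4) (Fin 4) ℝ)
    (hM : M = (1/(8*nn)) •
      !![0,        -ω^2*h,     0,          2*ω*ωt*h;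
         ω^2*h,    0,          2*ω*ωt*h,   0;
         0,        2*ω*ωt*ht,  0,          -ωt^2*ht;
         2*ω*ωt*ht, 0,         ωt^2*ht,    0]) :
    M.charpoly = X^4
      + C ((ω^4*h^2 + ωt^4*ht^2 - 8*ω^2*ωt^2*h*ht)/(8*nn)^2) * X^2
      + C (9*ω^4*ωt^4*h^2*ht^2/(8*nn)^4)
    ∧ ∀ x : ℝ, M.charpoly.eval x = M.charpoly.eval (-x) := by
  set k := 1 / (8 * nn) with hk
  have hM_checkerboard : M =
      !![0, -(k * (ω^2*h)), 0, k * (2*ω*ωt*h); k * (ω^2*h), 0, k * (2*ω*ωt*h), 0;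
        0, k * (2*ω*ωt*ht), 0, -(k * (ωt^2*ht)); k * (2*ω*ωt*ht), 0, k * (ωt^2*ht), 0] := by
    ext i j
    fin_cases i <;> fin_cases j <;> simp [hM]
  have hchar : M.charpoly = X^4
      + C ((ω^4*h^2 + ωt^4*ht^2 - 8*ω^2*ωt^2*h*ht)/(8*nn)^2) * X^2
      + C (9*ω^4*ωt^4*h^2*ht^2/(8*nn)^4) := by
    rw [hM_checkerboard, Matrix.charpoly_checkerboard, hk]
    congr 1
    · congr 3; ring
    · congr 1; ring
  refine ⟨hchar, fun x => ?_⟩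
  simp only [hchar, eval_add, eval_mul, eval_pow, eval_X, eval_C]
  ring

theorem linearisation_charpoly
    (ω ωt h ht nn : ℝ) (hn : nn ≠ 0)
    (M : Matrix (Fin 4) (Fin 4) ℝ)
    (hM : M = (1/(8*nn)) •
      !![0,        -ω^2*h,     0,          2*ω*ωt*h;
         ω^2*h,    0,          2*ω*ωt*h,   0;
         0,        2*ω*ωt*ht,  0,          -ωt^2*ht;
         2*ω*ωt*ht, 0,         ωt^2*ht,    0]) :
    M.charpoly = X^4
      + C ((ω^4*h^2 + ωt^4*ht^2 - 8*ω^2*ωt^2*h*ht)/(8*nn)^2) * X^2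
      + C (9*ω^4*ωt^4*h^2*ht^2/(8*nn)^4)
    ∧ ∀ x : ℝ, M.charpoly.eval x = M.charpoly.eval (-x) :=
  linearisation_charpoly_general ω ωt h ht nn M hM
end

section
/- Let ω, ω̃, h, h̃, n > 0 and consider the complex polynomial C(λ) = λ⁴ + λ² (ω⁴h² + ω̃⁴h̃² − 8ω²ω̃²hh̃)/(8n)² + 9 ω⁴ω̃⁴h²h̃²/(8n)⁴. Set r := ω⁴h² − 14ω²ω̃²hh̃ + ω̃⁴h̃². Then: (i) if r > 0, C has four distinct roots in ℂ, all of which are purely imaginary and nonzero; (ii) if r < 0 and ω²h ≠ ω̃²h̃, then every root of C in ℂ has nonzero real part and nonzero imaginary part (no root lies on the real or the imaginary axis). In particular, in case (ii) the relative equilibrium is linearly unstable of focus-focus type, and the transition at r = 0 is a Hamiltonian Hopf bifurcation. -/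
open Polynomial

private lemma aux_pos_disc (b c : ℝ) (hb : 0 < b) (hc : 0 < c) (hdisc : 0 < b^2 - 4*c)
    (P : Polynomial ℂ)
    (hP : P = X^4 + Polynomial.C ((b:ℝ):ℂ) * X^2 + Polynomial.C ((c:ℝ):ℂ)) :
    P.roots.toFinset.card = 4 ∧ ∀ z : ℂ, P.eval z = 0 → z.re = 0 ∧ z ≠ 0 := by
  set s : ℝ := Real.sqrt (b^2 - 4*c) with hs
  have hs2 : s^2 = b^2 - 4*c := Real.sq_sqrt hdisc.le
  have hs0 : 0 < s := Real.sqrt_pos.mpr hdisc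
  have hsb : s < b := by nlinarith
  set u : ℝ := Real.sqrt ((b+s)/2) with hu
  set v : ℝ := Real.sqrt ((b-s)/2) with hv
  have hu2 : u^2 = (b+s)/2 := Real.sq_sqrt (by linarith)
  have hv2 : v^2 = (b-s)/2 := Real.sq_sqrt (by linarith)
  have hu0 : 0 < u := Real.sqrt_pos.mpr (by linarith)
  have hv0 : 0 < v := Real.sqrt_pos.mpr (by linarith)
  have huv : v < u := by nlinarith
  have hbsum : u^2 + v^2 = b := by rw [hu2, hv2]; ring
  have hcprod : u^2 * v^2 = c := by rw [hu2, hv2]; nlinarith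
  have hev : ∀ z : ℂ, P.eval z
      = (z - u*Complex.I) * (z + u*Complex.I) * (z - v*Complex.I) * (z + v*Complex.I) := by
    intro z
    rw [hP]
    simp only [eval_add, eval_mul, eval_pow, eval_X, eval_C]
    have hb' : ((b:ℝ):ℂ) = (u:ℂ)^2 + (v:ℂ)^2 := by exact_mod_cast congrArg (Complex.ofReal) hbsum.symm
    have hc' : ((c:ℝ):ℂ) = (u:ℂ)^2 * (v:ℂ)^2 := by exact_mod_cast congrArg (Complex.ofReal) hcprod.symm
    rw [hb', hc']
    linear_combination (((u:ℂ)^2+(v:ℂ)^2)*z^2 + (u:ℂ)^2*(v:ℂ)^2*(1 - Complex.I^2)) * Complex.I_sq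
  have hP0 : P ≠ 0 := by
    have h4 : P.coeff 4 = 1 := by rw [hP]; simp [coeff_X_pow, coeff_C]
    intro h0; rw [h0] at h4; simp at h4
  have hroots : ∀ z : ℂ, P.eval z = 0 ↔
      (z = u*Complex.I ∨ z = -(u*Complex.I) ∨ z = v*Complex.I ∨ z = -(v*Complex.I)) := by
    intro z
    rw [hev z]
    constructor
    · intro h
      rcases mul_eq_zero.mp h with h' | h'
      · rcases mul_eq_zero.mp h' with h'' | h''
        · rcases mul_eq_zero.mp h'' with h3 | h3
          · left; linear_combination h3
          · right; left; linear_combination h3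
        · right; right; left; linear_combination h''
      · right; right; right; linear_combination h'
    · rintro (rfl|rfl|rfl|rfl) <;> ring
  have hfin : P.roots.toFinset = {(u:ℂ)*Complex.I, -((u:ℂ)*Complex.I), (v:ℂ)*Complex.I, -((v:ℂ)*Complex.I)} := by
    ext z
    simp only [Multiset.mem_toFinset, mem_roots hP0, IsRoot.def, hroots z,
      Finset.mem_insert, Finset.mem_singleton]
  constructor
  · rw [hfin]
    rw [Finset.card_insert_of_notMem, Finset.card_insert_of_notMem,
        Finset.card_insert_of_notMem, Finset.card_singleton]
    · simp only [Finset.mem_singleton]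
      intro heq
      have := congrArg Complex.im heq
      simp at this
      linarith
    · simp only [Finset.mem_insert, Finset.mem_singleton]
      push_neg
      constructor
      · intro heq; have := congrArg Complex.im heq; simp at this; linarith
      · intro heq; have := congrArg Complex.im heq; simp at this; linarith
    · simp only [Finset.mem_insert, Finset.mem_singleton]
      push_neg
      refine ⟨?_, ?_, ?_⟩ <;>
        · intro heq; have := congrArg Complex.im heq; simp at this; linarith
  · intro z hz
    rcases (hroots z).mp hz with rfl | rfl | rfl | rfl <;>
      constructor <;>
      simp [Complex.ext_iff] <;> intro h' <;> linarith

private lemma aux_neg_disc (b c : ℝ) (hdisc : b^2 - 4*c < 0)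
    (z : ℂ) (hz : z^4 + (b:ℂ)*z^2 + (c:ℂ) = 0) : z.re ≠ 0 ∧ z.im ≠ 0 := by
  have key : ∀ t : ℝ, 0 < t^2 + b*t + c := by
    intro t; nlinarith [sq_nonneg (2*t + b)]
  rw [Complex.ext_iff] at hz
  simp [pow_succ, Complex.mul_re, Complex.mul_im] at hz
  obtain ⟨h1, h2⟩ := hz
  constructor
  · intro hre; rw [hre] at h1; simp at h1
    nlinarith [key (-(z.im^2))]
  · intro him; rw [him] at h1; simp at h1
    nlinarith [key (z.re^2)]

/-!
STATEMENT 13: Eigenvalue structure of the linearisation at the relative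
equilibrium. For the quartic polynomial
`C(λ) = λ⁴ + λ²(ω⁴h² + ω̃⁴h̃² − 8ω²ω̃²hh̃)/(8n)² + 9ω⁴ω̃⁴h²h̃²/(8n)⁴` over `ℂ`
and `r = ω⁴h² − 14ω²ω̃²hh̃ + ω̃⁴h̃²`:
(i) if `r > 0` then `C` has four distinct roots, all purely imaginary and nonzero;
(ii) if `r < 0` and `ω²h ≠ ω̃²h̃` then no root of `C` lies on the real or the
imaginary axis (focus-focus instability; the transition at `r = 0` is a
Hamiltonian Hopf bifurcation).
-/

theorem charpoly_root_structure
    (ω ωt h ht nn : ℝ) (hω : 0 < ω) (hωt : 0 < ωt)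
    (hh : 0 < h) (hht : 0 < ht) (hn : 0 < nn)
    (P : Polynomial ℂ)
    (hP : P = X^4
      + C (((ω^4*h^2 + ωt^4*ht^2 - 8*ω^2*ωt^2*h*ht)/(8*nn)^2 : ℝ) : ℂ) * X^2
      + C ((9*ω^4*ωt^4*h^2*ht^2/(8*nn)^4 : ℝ) : ℂ))
    (r : ℝ) (hr : r = ω^4*h^2 - 14*ω^2*ωt^2*h*ht + ωt^4*ht^2) :
    (0 < r →
      P.roots.toFinset.card = 4 ∧
      ∀ z : ℂ, P.eval z = 0 → z.re = 0 ∧ z ≠ 0)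
    ∧ (r < 0 → ω^2*h ≠ ωt^2*ht →
      ∀ z : ℂ, P.eval z = 0 → z.re ≠ 0 ∧ z.im ≠ 0) := by
  set bR : ℝ := (ω^4*h^2 + ωt^4*ht^2 - 8*ω^2*ωt^2*h*ht)/(8*nn)^2 with hbR
  set cR : ℝ := 9*ω^4*ωt^4*h^2*ht^2/(8*nn)^4 with hcR
  have hnn4 : (0:ℝ) < (8*nn)^4 := by positivity
  have hB : (0:ℝ) < ω^2*ωt^2*h*ht := by positivity
  have hdisc_eq : bR^2 - 4*cR
      = ((ω^4*h^2 + ωt^4*ht^2 - 8*ω^2*ωt^2*h*ht)^2 - 36*(ω^2*ωt^2*h*ht)^2) / (8*nn)^4 := by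
    rw [hbR, hcR]
    field_simp
    ring
  constructor
  · intro hrpos
    rw [hr] at hrpos
    have hA2B : (0:ℝ) < ω^4*h^2 + ωt^4*ht^2 - 2*(ω^2*ωt^2*h*ht) := by linarith
    have hb : 0 < bR := by
      rw [hbR]
      apply div_pos (by linarith) (by positivity)
    have hc : 0 < cR := by rw [hcR]; positivity
    have hdisc : 0 < bR^2 - 4*cR := by
      rw [hdisc_eq]
      apply div_pos _ hnn4
      nlinarith [mul_pos hrpos hA2B]
    exact aux_pos_disc bR cR hb hc hdisc P hP
  · intro hrneg hne z hz
    rw [hr] at hrneg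
    have hne2 : ω^2*h - ωt^2*ht ≠ 0 := sub_ne_zero.mpr hne
    have hsq : (0:ℝ) < (ω^2*h - ωt^2*ht)^2 := by positivity
    have hdisc : bR^2 - 4*cR < 0 := by
      rw [hdisc_eq]
      apply div_neg_of_neg_of_pos _ hnn4
      nlinarith [mul_pos (neg_pos.mpr hrneg) hsq]
    have hz' : z^4 + (bR:ℂ)*z^2 + (cR:ℂ) = 0 := by
      rw [hP] at hz
      simpa [eval_add, eval_mul, eval_pow, eval_X, eval_C] using hz
    exact aux_neg_disc bR cR hdisc z hz'
end

section
/- Let n ≥ 6 be even, let 1 ≤ j < n/4 be an integer, and set ω = 2 sin(jπ/n), ω̃ = 2 sin((n/2 − j)π/n). Then ω̃ = 2 cos(jπ/n), ω² + ω̃² = 4, and for equal energies h = h̃ > 0 the bifurcation parameter satisfies r = ω⁴h² − 14ω²ω̃²h² + ω̃⁴h² = 16(1 − ω²ω̃²)h². Moreover ωω̃ = 2 sin(2jπ/n), and r < 0 if and only if ωω̃ > 1, which holds if and only if n/12 < j < n/4. Hence a superposition of two travelling waves of equal energy moving in the same direction with wave numbers j and n/2 − j is unstable precisely when n/12 < j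 < n/4. -/
set_option maxHeartbeats 1000000


/-!
STATEMENT 15: For even `n ≥ 6` and `1 ≤ j < n/4`, with `ω = 2 sin(jπ/n)` and
`ω̃ = 2 sin((n/2 − j)π/n)`: `ω̃ = 2 cos(jπ/n)`, `ω² + ω̃² = 4`, for equal energies
`h = h̃ > 0` the bifurcation parameter is `r = 16(1 − ω²ω̃²)h²`, `ωω̃ = 2 sin(2jπ/n)`,
and `r < 0 ↔ ωω̃ > 1 ↔ n/12 < j < n/4`: a superposition of two travelling waves of
equal energy moving in the same direction with wave numbers `j` and `n/2 − j` is
unstable precisely when `n/12 < j < n/4`.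
-/

theorem equal_energy_instability_range
    (n j : ℕ) (hn : 6 ≤ n) (hne : Even n) (hj1 : 1 ≤ j) (hj2 : 4*j < n)
    (h : ℝ) (hh : 0 < h)
    (ω ωt : ℝ)
    (hω : ω = 2 * Real.sin (j * Real.pi / n))
    (hωt : ωt = 2 * Real.sin (((n:ℝ)/2 - j) * Real.pi / n)) :
    ωt = 2 * Real.cos (j * Real.pi / n)
    ∧ ω^2 + ωt^2 = 4
    ∧ ω^4*h^2 - 14*ω^2*ωt^2*h*h + ωt^4*h^2 = 16*(1 - ω^2*ωt^2)*h^2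
    ∧ ω*ωt = 2 * Real.sin (2*j*Real.pi/n)
    ∧ (ω^4*h^2 - 14*ω^2*ωt^2*h*h + ωt^4*h^2 < 0 ↔ 1 < ω*ωt)
    ∧ (1 < ω*ωt ↔ ((n:ℝ)/12 < (j:ℝ) ∧ (j:ℝ) < (n:ℝ)/4)) := by
  have pi_pos := Real.pi_pos
  have hn0 : (0:ℝ) < n := by positivity
  have hnR : (6:ℝ) ≤ n := by exact_mod_cast hn
  have hjR : (1:ℝ) ≤ j := by exact_mod_cast hj1
  have hj2R : 4*(j:ℝ) < n := by exact_mod_cast hj2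
  set x : ℝ := j * Real.pi / n with hx
  have hx0 : 0 < x := by
    apply div_pos (by positivity) hn0
  have hx4 : x < Real.pi / 4 := by
    rw [hx, div_lt_div_iff₀ hn0 (by norm_num : (0:ℝ) < 4)]
    nlinarith
  have hsin : 0 < Real.sin x := Real.sin_pos_of_pos_of_lt_pi hx0 (by linarith)
  have hcos : 0 < Real.cos x := Real.cos_pos_of_mem_Ioo ⟨by linarith, by linarith⟩
  have harg : ((n:ℝ)/2 - j) * Real.pi / n = Real.pi/2 - x := by
    rw [hx]; field_simp
  have h1 : ωt = 2 * Real.cos x := by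
    rw [hωt, harg, Real.sin_pi_div_two_sub]
  have h2 : ω^2 + ωt^2 = 4 := by
    rw [hω, h1]
    nlinarith [Real.sin_sq_add_cos_sq x]
  have h3 : ω^4*h^2 - 14*ω^2*ωt^2*h*h + ωt^4*h^2 = 16*(1 - ω^2*ωt^2)*h^2 := by
    linear_combination h^2*(ω^2+ωt^2+4)*h2
  have harg2 : 2*(j:ℝ)*Real.pi/n = 2*x := by rw [hx]; ring
  have h4 : ω*ωt = 2 * Real.sin (2*j*Real.pi/n) := by
    rw [harg2, Real.sin_two_mul, hω, h1]; ring
  have hωpos : 0 < ω := by rw [hω]; positivity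
  have hωtpos : 0 < ωt := by rw [h1]; positivity
  have h5 : (ω^4*h^2 - 14*ω^2*ωt^2*h*h + ωt^4*h^2 < 0 ↔ 1 < ω*ωt) := by
    rw [h3]
    constructor
    · intro hr
      have hpos : 0 < h^2 := by positivity
      have hk : 1 < ω^2*ωt^2 := by
        by_contra hk
        push_neg at hk
        nlinarith [mul_nonneg (sub_nonneg.mpr hk) hpos.le]
      nlinarith [mul_pos hωpos hωtpos]
    · intro hr
      have hpos : 0 < h^2 := by positivity
      have h' : 1 < (ω*ωt)^2 := one_lt_pow₀ hr two_ne_zero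
      have hs : 1 < ω^2*ωt^2 := by nlinarith [h']
      nlinarith [mul_pos (sub_pos.mpr hs) hpos]
  refine ⟨h1, h2, h3, h4, h5, ?_⟩
  have hθlt : 2*x < Real.pi/2 := by linarith
  constructor
  · intro hgt
    refine ⟨?_, by linarith⟩
    -- 1 < 2 sin(2x) → π/6 < 2x → n/12 < j
    by_contra hcon
    push_neg at hcon
    -- j ≤ n/12, so 2x ≤ π/6
    have hθle : 2*x ≤ Real.pi/6 := by
      have e : 2*x = (2*(j:ℝ)*Real.pi)/n := by rw [hx]; ring
      rw [e, div_le_div_iff₀ hn0 (by norm_num : (0:ℝ) < 6)]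
      nlinarith
    have : Real.sin (2*x) ≤ Real.sin (Real.pi/6) := by
      apply Real.strictMonoOn_sin.monotoneOn
      · constructor <;> [linarith; linarith]
      · constructor <;> [linarith [Real.pi_pos]; linarith]
      · exact hθle
    rw [Real.sin_pi_div_six] at this
    have := h4
    rw [harg2] at this
    nlinarith
  · rintro ⟨hlt, -⟩
    have hθgt : Real.pi/6 < 2*x := by
      have e : 2*x = (2*(j:ℝ)*Real.pi)/n := by rw [hx]; ring
      rw [e, div_lt_div_iff₀ (by norm_num : (0:ℝ) < 6) hn0]
      nlinarith
    have : Real.sin (Real.pi/6) < Real.sin (2*x) := by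
      apply Real.strictMonoOn_sin
      · constructor <;> linarith
      · constructor <;> linarith
      · exact hθgt
    rw [Real.sin_pi_div_six] at this
    have h4' := h4
    rw [harg2] at h4'
    nlinarith
end
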